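/- (The new analytical bound is at least as good as the KAT bound) Let N ≥ 2 and let α_1,…,α_N, γ_1,…,γ_N be real numbers with α_i > 0 and α_i ≤ γ_i ≤ N·α_i for all i. Let δ = max(0, max_i (γ_i − (N−1)α_i)), and assume δ < α_i and δ ≤ (γ_i − α_i)/(N−1) for all i. Set α_i' = α_i − δ and γ_i' = γ_i − N·δ. Then δ + Σ_{i=1}^N [1/χ(γ_i'/α_i') − (γ_i'/α_i' − χ(γ_i'/α_i'))/((1+χ(γ_i'/α_i'))·χ(γ_i'/α_i'))]·α_i' ≥ Σ_{i=1}^N [1/⌊γ_i/α_i⌋ − (γ_i/α_i − ⌊γ_i/α_i⌋)/((1+⌊γ_i/α_i⌋)⌊γ_i/α_i⌋)]·α_i. -/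

import Mathlib

/-!
`chordInv k` is the line through `(k, 1/k)` and `(k + 1, 1/(k + 1))`, so `x ↦ chordInv ⌊x⌋ x` is the
piecewise linear interpolation of `1/x` at the integers; both bounds are sums of it, scaled by `α`
(`χ` only trades, at an integer point, one chord for its neighbour, which passes through the same point).
The interpolation is convex, so every chord lies below it: the new term is at least the chord with
`k = ⌊γᵢ/αᵢ⌋` at the shifted point. Scaled by `α` a chord is linear in `(α, γ)`, and the shift then
costs at most `δ/N` because `(N - k)(N - k - 1) ≥ 0` for integers; the `N` terms cost at most `δ`.
-/

open Classical in
/-- `χ(x) = x − 1` if `x` is an integer with `x ≥ 2`, and `χ(x) = ⌊x⌋` otherwise. -/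
noncomputable def chi (x : ℝ) : ℝ :=
  if (∃ n : ℤ, x = (n : ℝ)) ∧ 2 ≤ x then x - 1 else (⌊x⌋ : ℝ)

open Finset

noncomputable def chordInv (k x : ℝ) : ℝ := 1 / k - (x - k) / ((1 + k) * k)

lemma intCast_mul_sub_one_nonneg {R : Type*} [Ring R] [LinearOrder R] [IsStrictOrderedRing R]
    (a : ℤ) : (0 : R) ≤ a * (a - 1) := by
  have h : (0 : ℤ) ≤ a * (a - 1) := by
    rcases le_or_gt 1 a with h | h <;> nlinarith
  exact_mod_cast h

lemma chordInv_eq {k : ℝ} (hk : 0 < k) (x : ℝ) :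
    chordInv k x = (2 * k + 1 - x) / (k * (k + 1)) := by
  unfold chordInv
  field_simp
  ring

lemma chordInv_div_mul {k : ℝ} (hk : 0 < k) (c : ℝ) {a : ℝ} (ha : a ≠ 0) :
    chordInv k (c / a) * a = ((2 * k + 1) * a - c) / (k * (k + 1)) := by
  rw [chordInv_eq hk]
  field_simp

lemma chordInv_sub_one_self {x : ℝ} (hx : 2 ≤ x) : chordInv (x - 1) x = chordInv x x := by
  rw [chordInv_eq (by linarith), chordInv_eq (by linarith),
    div_eq_div_iff (by nlinarith) (by nlinarith)]
  ring

lemma chordInv_chi (x : ℝ) : chordInv (chi x) x = chordInv ⌊x⌋ x := by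
  unfold chi
  split_ifs with h
  · obtain ⟨⟨n, rfl⟩, h2⟩ := h
    rw [Int.floor_intCast, chordInv_sub_one_self h2]
  · rfl

lemma chordInv_le_chordInv_floor {k : ℤ} (hk : 1 ≤ k) {x : ℝ} (hx : 1 ≤ x) :
    chordInv k x ≤ chordInv ⌊x⌋ x := by
  set m : ℤ := ⌊x⌋
  have hmx : (m : ℝ) ≤ x := Int.floor_le x
  have hxm : x < m + 1 := Int.lt_floor_add_one x
  have hm : (1 : ℝ) ≤ m := by exact_mod_cast Int.le_floor.mpr (by exact_mod_cast hx)
  have hk' : (1 : ℝ) ≤ k := by exact_mod_cast hk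
  have hkm : (0 : ℝ) ≤ (k - m) * (k - m - 1) := by
    simpa using intCast_mul_sub_one_nonneg (R := ℝ) (k - m)
  have hkm' : (0 : ℝ) ≤ (k - m + 1) * (k - m) := by
    simpa using intCast_mul_sub_one_nonneg (R := ℝ) (k - m + 1)
  rw [chordInv_eq (by linarith), chordInv_eq (by linarith),
    div_le_div_iff₀ (by positivity) (by positivity)]
  have hright : (0 : ℝ) ≤ (m + 1 - x) * (m + 1) := by nlinarith
  have hleft : (0 : ℝ) ≤ (x - m) * m := by nlinarith
  nlinarith [mul_nonneg hright hkm', mul_nonneg hleft hkm]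

lemma chordInv_floor_mul_sub_le {N : ℕ} (hN : 0 < N) {α γ δ : ℝ} (hδ : 0 ≤ δ) (hδα : δ < α)
    (hαγ : α ≤ γ) (hδγ : (N - 1) * δ ≤ γ - α) :
    chordInv ⌊γ / α⌋ (γ / α) * α - δ / N ≤
      chordInv ⌊(γ - N * δ) / (α - δ)⌋ ((γ - N * δ) / (α - δ)) * (α - δ) := by
  have hα : 0 < α := hδ.trans_lt hδα
  have hα' : 0 < α - δ := sub_pos.mpr hδα
  set k : ℤ := ⌊γ / α⌋
  have hk : 1 ≤ k := Int.le_floor.mpr (by exact_mod_cast (one_le_div hα).mpr hαγ)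
  have hk' : (0 : ℝ) < k := by exact_mod_cast hk
  have hN' : (0 : ℝ) < N := by exact_mod_cast hN
  calc chordInv k (γ / α) * α - δ / N
      ≤ chordInv k ((γ - N * δ) / (α - δ)) * (α - δ) := by
        rw [chordInv_div_mul hk' _ hα.ne', chordInv_div_mul hk' _ hα'.ne', ← sub_nonneg]
        have hNk := intCast_mul_sub_one_nonneg (R := ℝ) (N - k)
        have hshift : ((2 * k + 1) * (α - δ) - (γ - N * δ)) / (k * (k + 1)) -
            (((2 * k + 1) * α - γ) / (k * (k + 1)) - δ / N) =
              δ * ((N - k) * (N - k - 1)) / (k * (k + 1) * N) := by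
          field_simp
          ring
        push_cast at hNk
        rw [hshift]
        positivity
    _ ≤ _ := by
        gcongr
        exact chordInv_le_chordInv_floor hk ((one_le_div hα').mpr (by nlinarith))

/-- The new analytical bound is at least as good as the KAT bound. -/
theorem yat_ge_kat (N : ℕ) (hN : 2 ≤ N) (α γ : Fin N → ℝ)
    (hγ1 : ∀ i, α i ≤ γ i)
    (δ : ℝ)
    (hδ : δ = max 0 (Finset.univ.sup' (Finset.univ_nonempty_iff.mpr ⟨⟨0, by omega⟩⟩)
        (fun i => γ i - ((N : ℝ) - 1) * α i)))
    (hδα : ∀ i, δ < α i) (hδβ : ∀ i, δ ≤ (γ i - α i) / ((N : ℝ) - 1))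
    (α' γ' : Fin N → ℝ)
    (hα' : ∀ i, α' i = α i - δ) (hγ' : ∀ i, γ' i = γ i - (N : ℝ) * δ) :
    δ + ∑ i : Fin N, (1 / chi (γ' i / α' i) -
        (γ' i / α' i - chi (γ' i / α' i)) /
          ((1 + chi (γ' i / α' i)) * chi (γ' i / α' i))) * α' i ≥
      ∑ i : Fin N, (1 / (⌊γ i / α i⌋ : ℝ) -
        (γ i / α i - (⌊γ i / α i⌋ : ℝ)) /
          ((1 + (⌊γ i / α i⌋ : ℝ)) * (⌊γ i / α i⌋ : ℝ))) * α i := by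
  show ∑ i, chordInv ⌊γ i / α i⌋ (γ i / α i) * α i ≤
    δ + ∑ i, chordInv (chi (γ' i / α' i)) (γ' i / α' i) * α' i
  have hδ0 : 0 ≤ δ := hδ ▸ le_max_left _ _
  have hN1 : (0 : ℝ) < N - 1 := by
    have : (2 : ℝ) ≤ N := by exact_mod_cast hN
    linarith
  have hterm (i : Fin N) : chordInv ⌊γ i / α i⌋ (γ i / α i) * α i - δ / N ≤
      chordInv (chi (γ' i / α' i)) (γ' i / α' i) * α' i := by
    rw [chordInv_chi, hα', hγ']
    refine chordInv_floor_mul_sub_le (by omega) hδ0 (hδα i) (hγ1 i) ?_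
    have := hδβ i
    rwa [le_div_iff₀ hN1, mul_comm] at this
  have hsum := Finset.sum_le_sum fun i (_ : i ∈ univ) => hterm i
  rw [sum_sub_distrib, sum_const, card_univ, Fintype.card_fin, nsmul_eq_mul,
    mul_div_cancel₀ _ (by positivity)] at hsum
  linarith
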